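/- Let k ≥ 2 and let K₁,…,K_d be categorical features with finite domains D₁,…,D_d forming a functional-dependency chain: there are functions f_i : D_i → D_{i+1} (for i = 1,…,d−1) such that every data point x = (x₁,…,x_d) ∈ X ⊆ D₁ × ⋯ × D_d satisfies x_{i+1} = f_i(x_i). For each i, let H_i ⊆ D_i be a set of k−1 'heavy' elements (those of largest marginal weight) and let C_i consist of the indicator vectors {1_e : e ∈ H_i} together with the weighted centroid μ_i of the indicator vectors of the remaining ('light') elements of D_i that occur in X (with positive weights). Define the assignment map c : X → C₁ × ⋯ × C_d by c(x) = (c₁(x₁),…,c_d(x_d)), where c_i(x_i) = 1_{x_i} if x_i ∈ H_i and c_i(x_i) = μ_i otherwise (this is the nearest-centroid assignment of the one-hot encoding of x, componentwise). Then the image of c has at most d(k−1) + 1 elements; i.e., at most d(k−1)+1 grid points of C₁ × ⋯ × C_d receive nonzero weight. -/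

import Mathlib

open Finset

noncomputable section

open Classical in
/-- The marginal weight of a value `e` of feature `i`: the total weight of the data
points `x ∈ X` with `x i = e`. -/
def margWeight {d : ℕ} {D : Fin d → Type} [∀ i, Fintype (D i)]
    (X : Finset (∀ i, D i)) (w : (∀ i, D i) → ℝ) (i : Fin d) (e : D i) : ℝ :=
  ∑ x ∈ X.filter (fun x => x i = e), w x

open Classical in
/-- The "light" values of feature `i`: those occurring in the data `X` but not in the
heavy set `H i`. -/
def lightSet {d : ℕ} {D : Fin d → Type} [∀ i, Fintype (D i)]
    (X : Finset (∀ i, D i)) (H : ∀ i, Finset (D i)) (i : Fin d) : Finset (D i) :=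
  (X.image (fun x => x i)) \ H i

open Classical in
/-- The weighted centroid of the one-hot encodings of the light values of feature `i`. -/
def lightCentroid {d : ℕ} {D : Fin d → Type} [∀ i, Fintype (D i)]
    (X : Finset (∀ i, D i)) (w : (∀ i, D i) → ℝ) (H : ∀ i, Finset (D i)) (i : Fin d) :
    EuclideanSpace ℝ (D i) :=
  ∑ e ∈ lightSet X H i,
    (margWeight X w i e / ∑ e' ∈ lightSet X H i, margWeight X w i e') •
      EuclideanSpace.single e (1 : ℝ)

open Classical in
/-- The componentwise nearest-centroid assignment map: feature value `x i` is sent to its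
own one-hot vector if it is heavy, and to the light centroid `μ_i` otherwise. -/
def assign {d : ℕ} {D : Fin d → Type} [∀ i, Fintype (D i)]
    (X : Finset (∀ i, D i)) (w : (∀ i, D i) → ℝ) (H : ∀ i, Finset (D i))
    (x : ∀ i, D i) (i : Fin d) : EuclideanSpace ℝ (D i) :=
  if x i ∈ H i then EuclideanSpace.single (x i) (1 : ℝ) else lightCentroid X w H i

open Classical in
/-- for `d` categorical features forming a functional-dependency chain
(each feature functionally determines the next one on the data `X`), with `H i` the set of
`k − 1` heaviest values of feature `i` and the nearest-centroid assignment map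
`c(x) = (c₁(x₁),…,c_d(x_d))` (heavy value ↦ its one-hot vector, light value ↦ the light
centroid `μ_i`), the image of `c` on `X` — i.e. the set of grid points of nonzero weight —
has at most `d(k − 1) + 1` elements. -/
theorem statement18 (d k : ℕ) (hd : 1 ≤ d) (hk : 2 ≤ k)
    (D : Fin d → Type) [∀ i, Fintype (D i)]
    (X : Finset (∀ i, D i)) (w : (∀ i, D i) → ℝ) (hw : ∀ x ∈ X, 0 < w x)
    (hchain : ∀ (i : Fin d) (h : (i : ℕ) + 1 < d),
      ∃ f : D i → D ⟨(i : ℕ) + 1, h⟩, ∀ x ∈ X, x ⟨(i : ℕ) + 1, h⟩ = f (x i))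
    (H : ∀ i, Finset (D i)) (hHcard : ∀ i, (H i).card = k - 1)
    (hHheavy : ∀ i : Fin d, ∀ e ∈ H i, ∀ e', e' ∉ H i →
      margWeight X w i e' ≤ margWeight X w i e) :
    (X.image (assign X w H)).card ≤ d * (k - 1) + 1 := by
  classical
  -- the chain determines all later coordinates from any earlier one
  have hdet : ∀ x ∈ X, ∀ y ∈ X, ∀ (j : ℕ) (hj : j < d) (i : ℕ) (hi : i < d),
      i ≤ j → x ⟨i, hi⟩ = y ⟨i, hi⟩ → x ⟨j, hj⟩ = y ⟨j, hj⟩ := by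
    intro x hx y hy j
    induction j with
    | zero =>
      intro hj i hi hij hxy
      have : i = 0 := Nat.le_zero.mp hij
      subst this
      exact hxy
    | succ j ih =>
      intro hj i hi hij hxy
      rcases Nat.lt_or_ge i (j + 1) with h | h
      · have hjd : j < d := Nat.lt_of_succ_lt hj
        have hx' : x ⟨j, hjd⟩ = y ⟨j, hjd⟩ := ih hjd i hi (Nat.lt_succ_iff.mp h) hxy
        obtain ⟨f, hf⟩ := hchain ⟨j, hjd⟩ hj
        rw [hf x hx, hf y hy, hx']
      · have : i = j + 1 := le_antisymm hij h
        subst this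
        exact hxy
  -- the "signature": minimal heavy coordinate together with its value
  set S : (∀ i, D i) → Finset (Fin d) := fun x => univ.filter (fun i => x i ∈ H i) with hS
  set g : (∀ i, D i) → Option (Σ i : Fin d, D i) := fun x =>
    if h : (S x).Nonempty then some ⟨(S x).min' h, x ((S x).min' h)⟩ else none with hg
  -- key: the signature determines the assignment
  have hkey : ∀ x ∈ X, ∀ y ∈ X, g x = g y → assign X w H x = assign X w H y := by
    intro x hx y hy hgxy
    by_cases hX' : (S x).Nonempty
    · have hY' : (S y).Nonempty := by
        by_contra hY'
        rw [hg] at hgxy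
        simp only [dif_pos hX', dif_neg hY'] at hgxy
        exact Option.some_ne_none _ hgxy
      rw [hg] at hgxy
      simp only [dif_pos hX', dif_pos hY'] at hgxy
      set ix := (S x).min' hX' with hix
      set iy := (S y).min' hY' with hiy
      have hfst : ix = iy := congrArg Sigma.fst (Option.some_injective _ hgxy)
      have hsnd : x ix = y ix := by
        obtain ⟨h1, h2⟩ := Sigma.mk.inj_iff.mp (Option.some_injective _ hgxy)
        rw [← hfst] at h2
        exact eq_of_heq h2
      funext i
      by_cases hle : ix ≤ i
      · have hxyi : x i = y i := by
          have := hdet x hx y hy i.val i.isLt ix.val ix.isLt hle hsnd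
          simpa using this
        unfold assign
        rw [hxyi]
      · -- i < ix, so both coordinates are light
        have hxl : x i ∉ H i := by
          intro hmem
          exact hle ((S x).min'_le i (by simp [hS, hmem]))
        have hyl : y i ∉ H i := by
          intro hmem
          have : iy ≤ i := (S y).min'_le i (by simp [hS, hmem])
          rw [← hfst] at this
          exact hle this
        unfold assign
        rw [if_neg hxl, if_neg hyl]
    · have hY' : ¬ (S y).Nonempty := by
        by_contra hY'
        rw [hg] at hgxy
        simp only [dif_neg hX', dif_pos hY'] at hgxy
        exact Option.some_ne_none _ hgxy.symm
      have hxl : ∀ i, x i ∉ H i := by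
        intro i hmem
        exact hX' ⟨i, by simp [hS, hmem]⟩
      have hyl : ∀ i, y i ∉ H i := by
        intro i hmem
        exact hY' ⟨i, by simp [hS, hmem]⟩
      funext i
      unfold assign
      rw [if_neg (hxl i), if_neg (hyl i)]
  -- the image of `assign` is no bigger than the image of `g`
  have hstep : (X.image (assign X w H)).card ≤ (X.image g).card := by
    apply Finset.card_le_card_of_surjOn
      (fun o => if h : ∃ x, x ∈ X ∧ g x = o then assign X w H h.choose else fun _ => 0)
    intro a ha
    simp only [Finset.coe_image, Set.mem_image, Finset.mem_coe] at ha ⊢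
    obtain ⟨x, hx, rfl⟩ := ha
    refine ⟨g x, ⟨x, hx, rfl⟩, ?_⟩
    have hex : ∃ z, z ∈ X ∧ g z = g x := ⟨x, hx, rfl⟩
    rw [dif_pos hex]
    exact hkey _ hex.choose_spec.1 _ hx hex.choose_spec.2
  -- the image of `g` lands in `none` plus the sigma of the heavy sets
  have hsub : X.image g ⊆ insert none (((univ : Finset (Fin d)).sigma H).image some) := by
    intro o ho
    obtain ⟨x, hx, rfl⟩ := Finset.mem_image.mp ho
    by_cases h : (S x).Nonempty
    · have hmem : x ((S x).min' h) ∈ H ((S x).min' h) := by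
        have := (S x).min'_mem h
        simpa [hS] using this
      rw [hg]
      simp only [dif_pos h]
      apply Finset.mem_insert_of_mem
      exact Finset.mem_image_of_mem _ (Finset.mem_sigma.mpr ⟨Finset.mem_univ _, hmem⟩)
    · rw [hg]
      simp [dif_neg h]
  calc (X.image (assign X w H)).card
      ≤ (X.image g).card := hstep
    _ ≤ (insert none (((univ : Finset (Fin d)).sigma H).image some)).card :=
        Finset.card_le_card hsub
    _ ≤ (((univ : Finset (Fin d)).sigma H).image some).card + 1 :=
        Finset.card_insert_le _ _
    _ ≤ ((univ : Finset (Fin d)).sigma H).card + 1 := by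
        exact Nat.add_le_add_right (Finset.card_image_le) 1
    _ = d * (k - 1) + 1 := by
        rw [Finset.card_sigma]
        simp [hHcard, Finset.sum_const, Finset.card_univ, mul_comm]

end
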